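/- arXiv:2002.10716 — 2 statements merged into one kernel-verified Lean document; each statement's English description precedes it below -/
import Mathlib

section
/- Suppose the extra data is a single point, i.e. X_ext consists of the single row x_extᵀ for some x_ext ∈ ℝ^d. If Π⊥_std x_ext is an eigenvector of Σ (i.e. Σ(Π⊥_std x_ext) = λ · Π⊥_std x_ext for some λ ≥ 0), then for every true parameter θ⋆ the augmented estimator does not have larger standard error than the standard estimator: L_std(θ̂_aug) ≤ L_std(θ̂_std). -/
open Matrix BigOperators

/-- Standard (population) error of `θ` w.r.t. covariance `S` and true parameter `θstar`:
`(θ − θ⋆)ᵀ Σ (θ − θ⋆)`. -/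
def Lstd {d : ℕ} (S : Matrix (Fin d) (Fin d) ℝ) (θstar θ : Fin d → ℝ) : ℝ :=
  (θ - θstar) ⬝ᵥ S.mulVec (θ - θstar)

/-- `θ` is the minimum Euclidean-norm solution of the constraint `C`. -/
def IsMinNormInterp {d : ℕ} (C : (Fin d → ℝ) → Prop) (θ : Fin d → ℝ) : Prop :=
  C θ ∧ ∀ θ', C θ' → θ ⬝ᵥ θ ≤ θ' ⬝ᵥ θ'

/-- `P` is the orthogonal projection matrix onto `Null(X)`:
symmetric, idempotent, range contained in `Null(X)`, and fixing `Null(X)`. -/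
def IsOrthProjNull {n d : ℕ} (X : Matrix (Fin n) (Fin d) ℝ)
    (P : Matrix (Fin d) (Fin d) ℝ) : Prop :=
  Pᵀ = P ∧ P * P = P ∧ (∀ v, X.mulVec (P.mulVec v) = 0) ∧
    (∀ v, X.mulVec v = 0 → P.mulVec v = v)

/-- `P` is the orthogonal projection matrix onto `Null(X1) ∩ Null(X2)`. -/
def IsOrthProjNull2 {n m d : ℕ} (X1 : Matrix (Fin n) (Fin d) ℝ)
    (X2 : Matrix (Fin m) (Fin d) ℝ) (P : Matrix (Fin d) (Fin d) ℝ) : Prop :=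
  Pᵀ = P ∧ P * P = P ∧ (∀ v, X1.mulVec (P.mulVec v) = 0 ∧ X2.mulVec (P.mulVec v) = 0) ∧
    (∀ v, X1.mulVec v = 0 → X2.mulVec v = 0 → P.mulVec v = v)

/-!
The augmented and standard interpolants differ by a multiple of `q = Π⊥_std x_ext`: both are
orthogonal to every null direction of `X_std` that is orthogonal to `q`. The augmented error
`θ̂_aug − θ⋆` is orthogonal to `q`, so when `q` is an eigenvector of `Σ` the cross term in
`L_std(θ̂_std) = L_std(θ̂_aug + c q)` vanishes and only the nonnegative term `c² qᵀ Σ q` remains.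
-/

lemma IsMinNormInterp.dotProduct_eq_zero {d : ℕ} {C : (Fin d → ℝ) → Prop} {θ v : Fin d → ℝ}
    (h : IsMinNormInterp C θ) (hline : ∀ s : ℝ, C (θ + s • v)) : θ ⬝ᵥ v = 0 := by
  have hquad : ∀ s : ℝ, 0 ≤ (v ⬝ᵥ v) * (s * s) + 2 * (θ ⬝ᵥ v) * s + 0 := fun s => by
    have hle := h.2 _ (hline s)
    simp only [add_dotProduct, dotProduct_add, smul_dotProduct, dotProduct_smul, smul_eq_mul,
      dotProduct_comm v θ] at hle
    linarith
  have hdisc := discrim_le_zero hquad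
  rw [discrim] at hdisc
  nlinarith [sq_nonneg (θ ⬝ᵥ v)]

section

variable {ι : Type*} [Fintype ι]

lemma exists_eq_smul_add_and_dotProduct_eq_zero (u q : ι → ℝ) :
    ∃ (c : ℝ) (v : ι → ℝ), u = c • q + v ∧ q ⬝ᵥ v = 0 := by
  refine ⟨(q ⬝ᵥ u) / (q ⬝ᵥ q), u - ((q ⬝ᵥ u) / (q ⬝ᵥ q)) • q, by abel, ?_⟩
  rw [dotProduct_sub, dotProduct_smul, smul_eq_mul]
  by_cases hq : q ⬝ᵥ q = 0
  · simp [dotProduct_self_eq_zero.mp hq]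
  · field_simp
    ring

lemma dotProduct_mulVec_le_add_of_eigenvector {S : Matrix ι ι ℝ} (hS : S.PosSemidef)
    {e w : ι → ℝ} {μ : ℝ} (hw : S *ᵥ w = μ • w) (hwe : w ⬝ᵥ e = 0) :
    e ⬝ᵥ S *ᵥ e ≤ (e + w) ⬝ᵥ S *ᵥ (e + w) := by
  have hST : Sᵀ = S := by rw [← conjTranspose_eq_transpose_of_trivial]; exact hS.1
  have hwSe : w ⬝ᵥ S *ᵥ e = 0 := by
    rw [dotProduct_mulVec, ← mulVec_transpose, hST, hw, smul_dotProduct, hwe, smul_zero]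
  have heSw : e ⬝ᵥ S *ᵥ w = 0 := by
    rw [hw, dotProduct_smul, dotProduct_comm, hwe, smul_zero]
  have hwSw : 0 ≤ w ⬝ᵥ S *ᵥ w := by simpa using hS.dotProduct_mulVec_nonneg w
  rw [mulVec_add, add_dotProduct, dotProduct_add, dotProduct_add, hwSe, heSw]
  linarith

end

theorem eigenvector_augmentation_safe_general {n d : ℕ}
    (Xstd : Matrix (Fin n) (Fin d) ℝ)
    (S : Matrix (Fin d) (Fin d) ℝ) (hS : S.PosSemidef)
    (Pstd : Matrix (Fin d) (Fin d) ℝ) (hPstd : IsOrthProjNull Xstd Pstd)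
    (xext : Fin d → ℝ) (lam : ℝ)
    (heig : S.mulVec (Pstd.mulVec xext) = lam • Pstd.mulVec xext)
    (θstar θstd θaug : Fin d → ℝ)
    (hstd : IsMinNormInterp (fun θ => Xstd.mulVec θ = Xstd.mulVec θstar) θstd)
    (haug : IsMinNormInterp
      (fun θ => Xstd.mulVec θ = Xstd.mulVec θstar ∧ xext ⬝ᵥ θ = xext ⬝ᵥ θstar) θaug) :
    Lstd S θstar θaug ≤ Lstd S θstar θstd := by
  obtain ⟨hPT, -, hXP, hPfix⟩ := hPstd
  set q := Pstd *ᵥ xext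
  have hxext : ∀ v, Xstd *ᵥ v = 0 → xext ⬝ᵥ v = q ⬝ᵥ v := fun v hv => by
    rw [← hPfix v hv, dotProduct_mulVec, ← mulVec_transpose, hPT, hPfix v hv]
  obtain ⟨c, v, hdiff, hqv⟩ := exists_eq_smul_add_and_dotProduct_eq_zero (θstd - θaug) q
  have hXv : Xstd *ᵥ v = 0 := by
    rw [eq_sub_of_add_eq' hdiff.symm, mulVec_sub, mulVec_sub, mulVec_smul, hstd.1, haug.1.1,
      hXP, smul_zero, sub_self, sub_zero]
  have hv : v = 0 := by
    have hstd_v := hstd.dotProduct_eq_zero (v := v) fun s => by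
      simp only [mulVec_add, mulVec_smul, hXv, smul_zero, add_zero, hstd.1]
    have haug_v := haug.dotProduct_eq_zero (v := v) fun s => by
      simp only [mulVec_add, mulVec_smul, hXv, smul_zero, add_zero, dotProduct_add, dotProduct_smul,
        hxext v hXv, hqv, haug.1, and_self]
    have hvv : v ⬝ᵥ v = (θstd - θaug) ⬝ᵥ v - c * (q ⬝ᵥ v) := by
      rw [hdiff, add_dotProduct, smul_dotProduct, smul_eq_mul]; ring
    rw [sub_dotProduct, hstd_v, haug_v, hqv] at hvv
    exact dotProduct_self_eq_zero.mp (by simpa using hvv)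
  have hq_err : q ⬝ᵥ (θaug - θstar) = 0 := by
    rw [← hxext _ (by rw [mulVec_sub, haug.1.1, sub_self]), dotProduct_sub, haug.1.2, sub_self]
  have herr : θaug - θstar + c • q = θstd - θstar := by
    rw [hv, add_zero] at hdiff
    rw [← hdiff]
    abel
  calc Lstd S θstar θaug
      ≤ (θaug - θstar + c • q) ⬝ᵥ S *ᵥ (θaug - θstar + c • q) :=
        dotProduct_mulVec_le_add_of_eigenvector hS (μ := lam)
          (by rw [mulVec_smul, heig, smul_comm]) (by rw [smul_dotProduct, hq_err, smul_zero])
    _ = Lstd S θstar θstd := by rw [herr, Lstd]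

/-- Corollary 2, condition 3 (paper): if the single extra point is such that its
projection onto the null space of the standard data is an eigenvector of the
covariance, augmentation does not increase standard error, for every true parameter. -/
theorem eigenvector_augmentation_safe {n d : ℕ}
    (Xstd : Matrix (Fin n) (Fin d) ℝ)
    (S : Matrix (Fin d) (Fin d) ℝ) (hS : S.PosSemidef)
    (Pstd : Matrix (Fin d) (Fin d) ℝ) (hPstd : IsOrthProjNull Xstd Pstd)
    (xext : Fin d → ℝ) (lam : ℝ) (hlam : 0 ≤ lam)
    (heig : S.mulVec (Pstd.mulVec xext) = lam • Pstd.mulVec xext)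
    (θstar θstd θaug : Fin d → ℝ)
    (hstd : IsMinNormInterp (fun θ => Xstd.mulVec θ = Xstd.mulVec θstar) θstd)
    (haug : IsMinNormInterp
      (fun θ => Xstd.mulVec θ = Xstd.mulVec θstar ∧ xext ⬝ᵥ θ = xext ⬝ᵥ θstar) θaug) :
    Lstd S θstar θaug ≤ Lstd S θstar θstd :=
  eigenvector_augmentation_safe_general Xstd S hS Pstd hPstd xext lam heig θstar θstd θaug hstd haug
end

section
/- Suppose Σ is positive definite with condition number at most 2, i.e. λ_max(Σ)/λ_min(Σ) ≤ 2, and suppose Π⊥_std θ⋆ is an eigenvector of Σ (i.e. Σ Π⊥_std θ⋆ = λ Π⊥_std θ⋆ for some λ > 0). Then for every single extra data point x_ext ∈ ℝ^d (X_ext consisting of the single row x_extᵀ), the augmented estimator does not have larger standard error than the standard estimator: L_std(θ̂_aug) ≤ L_std(θ̂_std). -/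
open Matrix BigOperators

lemma dot_self_nonneg' {d : ℕ} (v : Fin d → ℝ) : 0 ≤ v ⬝ᵥ v :=
  Finset.sum_nonneg fun _ _ => mul_self_nonneg _

lemma dot_sym_mulVec {d : ℕ} {A : Matrix (Fin d) (Fin d) ℝ} (hA : Aᵀ = A)
    (v w : Fin d → ℝ) : v ⬝ᵥ A.mulVec w = A.mulVec v ⬝ᵥ w := by
  rw [Matrix.dotProduct_mulVec, ← Matrix.mulVec_transpose, hA]

lemma minnorm_unique {d : ℕ} (C : (Fin d → ℝ) → Prop) (θ θ0 : Fin d → ℝ)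
    (h : IsMinNormInterp C θ) (h0 : C θ0)
    (horth : ∀ θ', C θ' → θ0 ⬝ᵥ (θ' - θ0) = 0) : θ = θ0 := by
  have hle : θ ⬝ᵥ θ ≤ θ0 ⬝ᵥ θ0 := h.2 θ0 h0
  have hw : θ0 ⬝ᵥ (θ - θ0) = 0 := horth θ h.1
  set w : Fin d → ℝ := θ - θ0 with hwdef
  have hθ : θ = θ0 + w := by simp [hwdef]
  have hexp : θ ⬝ᵥ θ = θ0 ⬝ᵥ θ0 + 2 * (θ0 ⬝ᵥ w) + w ⬝ᵥ w := by
    rw [hθ]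
    simp only [add_dotProduct, dotProduct_add]
    rw [dotProduct_comm w θ0]; ring
  have hww : w ⬝ᵥ w ≤ 0 := by rw [hexp, hw] at hle; linarith
  have hw0 : w = 0 := dotProduct_self_eq_zero.mp
    (le_antisymm hww (dot_self_nonneg' w))
  rw [hθ, hw0, add_zero]

/-- Corollary characterization (c) of the paper: if `Σ` is positive definite with
condition number at most 2 and the projection of the true parameter onto the null
space of the standard data is an eigenvector of `Σ`, then no single extra point
increases the standard error. -/
theorem well_conditioned_augmentation_safe {n d : ℕ}
    (Xstd : Matrix (Fin n) (Fin d) ℝ)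
    (S : Matrix (Fin d) (Fin d) ℝ) (hS : S.PosDef)
    (hcond : ∃ a b : ℝ, 0 < a ∧ b ≤ 2 * a ∧
      ∀ x : Fin d → ℝ, a * (x ⬝ᵥ x) ≤ x ⬝ᵥ S.mulVec x ∧ x ⬝ᵥ S.mulVec x ≤ b * (x ⬝ᵥ x))
    (Pstd : Matrix (Fin d) (Fin d) ℝ) (hPstd : IsOrthProjNull Xstd Pstd)
    (θstar : Fin d → ℝ) (lam : ℝ) (hlam : 0 < lam)
    (heig : S.mulVec (Pstd.mulVec θstar) = lam • Pstd.mulVec θstar)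
    (θstd : Fin d → ℝ)
    (hstd : IsMinNormInterp (fun θ => Xstd.mulVec θ = Xstd.mulVec θstar) θstd) :
    ∀ (xext θaug : Fin d → ℝ),
      IsMinNormInterp
        (fun θ => Xstd.mulVec θ = Xstd.mulVec θstar ∧ xext ⬝ᵥ θ = xext ⬝ᵥ θstar) θaug →
      Lstd S θstar θaug ≤ Lstd S θstar θstd := by
  intro xext θaug haug
  obtain ⟨hPsym, hPP, hPnull, hPfix⟩ := hPstd
  obtain ⟨a, b, ha, hba, hab⟩ := hcond
  have hSsym : Sᵀ = S := hS.1
  set u : Fin d → ℝ := Pstd.mulVec θstar with hu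
  set z : Fin d → ℝ := Pstd.mulVec xext with hz
  have hPu : Pstd.mulVec u = u := by
    rw [hu, Matrix.mulVec_mulVec, hPP]
  have hPz : Pstd.mulVec z = z := by
    rw [hz, Matrix.mulVec_mulVec, hPP]
  have hXu : Xstd.mulVec u = 0 := hPnull θstar
  have hXz : Xstd.mulVec z = 0 := hPnull xext
  -- basic dot identities
  have hxu : xext ⬝ᵥ u = z ⬝ᵥ u := by
    conv_lhs => rw [← hPu]
    rw [dot_sym_mulVec hPsym, ← hz]
  have hxz : xext ⬝ᵥ z = z ⬝ᵥ z := by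
    conv_lhs => rw [← hPz]
    rw [dot_sym_mulVec hPsym, ← hz]
  -- choose c
  set c : ℝ := if h : z ⬝ᵥ z = 0 then 0 else (z ⬝ᵥ u) / (z ⬝ᵥ z) with hc
  have hczz : c * (z ⬝ᵥ z) = z ⬝ᵥ u := by
    by_cases h : z ⬝ᵥ z = 0
    · have hz0 : z = 0 := dotProduct_self_eq_zero.mp h
      simp [hc, h, hz0]
    · rw [hc, dif_neg h, div_mul_cancel₀ _ h]
  -- θstd = θstar - u
  have hPθ0 : Pstd.mulVec (θstar - u) = 0 := by
    rw [Matrix.mulVec_sub, hPu, ← hu, sub_self]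
  have hstd_eq : θstd = θstar - u := by
    apply minnorm_unique _ _ _ hstd
    · show Xstd.mulVec (θstar - u) = Xstd.mulVec θstar
      rw [Matrix.mulVec_sub, hXu, sub_zero]
    · intro θ' hθ'
      have hXw : Xstd.mulVec (θ' - (θstar - u)) = 0 := by
        rw [Matrix.mulVec_sub, hθ', Matrix.mulVec_sub, hXu, sub_zero, sub_self]
      calc (θstar - u) ⬝ᵥ (θ' - (θstar - u))
          = (θstar - u) ⬝ᵥ Pstd.mulVec (θ' - (θstar - u)) := by rw [hPfix _ hXw]
        _ = Pstd.mulVec (θstar - u) ⬝ᵥ (θ' - (θstar - u)) := dot_sym_mulVec hPsym _ _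
        _ = 0 := by rw [hPθ0, zero_dotProduct]
  -- θaug = θstar - u + c • z
  have haug_eq : θaug = θstar - u + c • z := by
    apply minnorm_unique _ _ _ haug
    · constructor
      · show Xstd.mulVec (θstar - u + c • z) = Xstd.mulVec θstar
        rw [Matrix.mulVec_add, Matrix.mulVec_sub, hXu, Matrix.mulVec_smul, hXz]
        simp
      · show xext ⬝ᵥ (θstar - u + c • z) = xext ⬝ᵥ θstar
        rw [dotProduct_add, dotProduct_sub, dotProduct_smul,
          hxu, hxz, smul_eq_mul, hczz]
        ring
    · intro θ' ⟨hθ'1, hθ'2⟩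
      set w : Fin d → ℝ := θ' - (θstar - u + c • z) with hw
      have hXw : Xstd.mulVec w = 0 := by
        rw [hw, Matrix.mulVec_sub, hθ'1, Matrix.mulVec_add, Matrix.mulVec_sub, hXu,
          Matrix.mulVec_smul, hXz]
        simp
      have hxw : xext ⬝ᵥ w = 0 := by
        rw [hw, dotProduct_sub, hθ'2, dotProduct_add, dotProduct_sub,
          dotProduct_smul, hxu, hxz, smul_eq_mul, hczz]
        ring
      have hzw : z ⬝ᵥ w = 0 := by
        calc z ⬝ᵥ w = Pstd.mulVec xext ⬝ᵥ w := by rw [hz]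
          _ = xext ⬝ᵥ Pstd.mulVec w := (dot_sym_mulVec hPsym _ _).symm
          _ = xext ⬝ᵥ w := by rw [hPfix _ hXw]
          _ = 0 := hxw
      have h1 : (θstar - u) ⬝ᵥ w = 0 := by
        calc (θstar - u) ⬝ᵥ w
            = (θstar - u) ⬝ᵥ Pstd.mulVec w := by rw [hPfix _ hXw]
          _ = Pstd.mulVec (θstar - u) ⬝ᵥ w := dot_sym_mulVec hPsym _ _
          _ = 0 := by rw [hPθ0, zero_dotProduct]
      rw [add_dotProduct, h1, smul_dotProduct, hzw]
      simp
  -- compute the two errors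
  have hLstd : Lstd S θstar θstd = lam * (u ⬝ᵥ u) := by
    rw [Lstd, hstd_eq]
    have : θstar - u - θstar = -u := by ring
    rw [this, Matrix.mulVec_neg, heig, neg_dotProduct, dotProduct_neg,
      neg_neg, dotProduct_smul, smul_eq_mul]
  have hzSu : z ⬝ᵥ S.mulVec u = lam * (z ⬝ᵥ u) := by
    rw [heig, dotProduct_smul, smul_eq_mul]
  have huSu : u ⬝ᵥ S.mulVec u = lam * (u ⬝ᵥ u) := by
    rw [heig, dotProduct_smul, smul_eq_mul]
  have huSz : u ⬝ᵥ S.mulVec z = lam * (z ⬝ᵥ u) := by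
    rw [dot_sym_mulVec hSsym, dotProduct_comm, hzSu]
  have hLaug : Lstd S θstar θaug
      = c ^ 2 * (z ⬝ᵥ S.mulVec z) - 2 * c * (lam * (z ⬝ᵥ u)) + lam * (u ⬝ᵥ u) := by
    rw [Lstd, haug_eq]
    have : θstar - u + c • z - θstar = c • z - u := by ring
    rw [this, Matrix.mulVec_sub, Matrix.mulVec_smul, sub_dotProduct,
      smul_dotProduct, dotProduct_sub, dotProduct_sub,
      dotProduct_smul, dotProduct_smul, hzSu, huSz, huSu,
      smul_eq_mul, smul_eq_mul, smul_eq_mul]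
    ring
  rw [hLaug, hLstd]
  -- suffices: c^2 * (z ⬝ᵥ S z) ≤ 2 * c * (lam * (z ⬝ᵥ u))
  have key : c ^ 2 * (z ⬝ᵥ S.mulVec z) ≤ 2 * c * (lam * (z ⬝ᵥ u)) := by
    by_cases hc0 : c = 0
    · simp [hc0]
    · have hzz0 : z ⬝ᵥ z ≠ 0 := by
        intro h; apply hc0; rw [hc, dif_pos h]
      have hzu0 : z ⬝ᵥ u ≠ 0 := by
        intro h; apply hc0; rw [hc, dif_neg hzz0, h, zero_div]
      have hu0 : u ≠ 0 := by
        intro h; apply hzu0; simp [h]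
      have huu : 0 < u ⬝ᵥ u :=
        lt_of_le_of_ne (dot_self_nonneg' u)
          (fun h => hu0 (dotProduct_self_eq_zero.mp h.symm))
      have halam : a ≤ lam := by
        have h1 := (hab u).1
        rw [huSu] at h1
        nlinarith
      have hSz : z ⬝ᵥ S.mulVec z ≤ 2 * lam * (z ⬝ᵥ z) := by
        have h2 := (hab z).2
        have hzznn := dot_self_nonneg' z
        nlinarith
      have hc2 : (0:ℝ) ≤ c ^ 2 := sq_nonneg c
      calc c ^ 2 * (z ⬝ᵥ S.mulVec z) ≤ c ^ 2 * (2 * lam * (z ⬝ᵥ z)) :=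
            mul_le_mul_of_nonneg_left hSz hc2
        _ = 2 * lam * c * (c * (z ⬝ᵥ z)) := by ring
        _ = 2 * c * (lam * (z ⬝ᵥ u)) := by rw [hczz]; ring
  linarith
end
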